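/- For d ≥ 2, let f_{d,1}(x) = (Σ_{j=1}^d x_j − (d−1))₊ for x ∈ [0,1]^d, where y₊ = max(y,0). Then the mean dimension of f_{d,1} with respect to X ~ U[0,1]^d equals ν(f_{d,1}) = d · (1 − 3/(d+3)) / (1 − (d+2)/(2(d+1)!)), and consequently ν(f_{d,1}) = d − 3 + o(1) as d → ∞, i.e., lim_{d→∞} (ν(f_{d,1}) − (d−3)) = 0. -/

import Mathlib

open MeasureTheory ProbabilityTheory Real Filter

noncomputable section

/-- Uniform measure on the cube `[0,1]^d`. -/
def unifCube (d : ℕ) : Measure (Fin d → ℝ) :=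
  Measure.pi fun _ => (volume : Measure ℝ).restrict (Set.Icc 0 1)

/-- Sobol' total index `τ̄²_j(f) = (1/2)·E[(f(X) − f(X_{−j}:Z_j))²]`
for `X, Z` independent and uniform on `[0,1]^d`. -/
def sobolTauU (d : ℕ) (f : (Fin d → ℝ) → ℝ) (j : Fin d) : ℝ :=
  (1 / 2) * ∫ p : (Fin d → ℝ) × (Fin d → ℝ),
    (f p.1 - f (Function.update p.1 j (p.2 j))) ^ 2
      ∂((unifCube d).prod (unifCube d))

/-- Mean dimension `ν(f) = (Σ_j τ̄²_j(f)) / Var(f(X))`. -/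
def meanDimU (d : ℕ) (f : (Fin d → ℝ) → ℝ) : ℝ :=
  (∑ j, sobolTauU d f j) / variance f (unifCube d)

/-- The cusp function `f_{d,p}(x) = (Σ_j x_j − (d−1))₊^p`, with the
convention that `f_{d,0}` is the indicator `1{Σ_j x_j > d−1}`. -/
def fdp (d : ℕ) (p : ℝ) (x : Fin d → ℝ) : ℝ :=
  if p = 0 then (if (d : ℝ) - 1 < ∑ j, x j then 1 else 0)
  else (max ((∑ j, x j) - ((d : ℝ) - 1)) 0) ^ p

/-!
Write `d = m + 1` and fix a coordinate `j`. With `s = ∑_{i ≠ j} x_i - (m - 1) ≤ 1` the cusp is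
`f_{d,1}(x) = (s + x_j - 1)₊`, so `τ̄²_j`, the mean over the other coordinates of the variance in
`x_j`, equals `E[s₊³/3 - s₊⁴/4]`. Hence `τ̄²_j` and `Var f_{d,1}` are combinations of the moments
`E[(∑_i x_i - (m - 1))₊^k] = k!/(m + k)!` (`k ≥ 1`), obtained by integrating out one coordinate at
a time. The resulting closed form gives `ν - (d - 3) = (9/(d + 3) + (d - 3) ε_d)/(1 - ε_d)` with
`ε_d = (d + 2)/(2 (d + 1)!) → 0`.
-/

open Nat Topology

local notation "μ₀" => Measure.restrict (volume : Measure ℝ) (Set.Icc (0 : ℝ) 1)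

instance : IsProbabilityMeasure μ₀ := ⟨by simp⟩

instance (d : ℕ) : IsProbabilityMeasure (unifCube d) := by
  unfold unifCube; infer_instance

section Variance

variable {Ω : Type*} [MeasurableSpace Ω] {μ : Measure Ω} [IsProbabilityMeasure μ]

theorem integral_sub_sq_prod_eq_two_mul_variance {g : Ω → ℝ} (hg : MemLp g 2 μ) :
    ∫ p, (g p.1 - g p.2) ^ 2 ∂μ.prod μ = 2 * Var[g; μ] := by
  have hmean : ∫ p, (g p.1 - g p.2) ∂μ.prod μ = 0 := by
    rw [integral_sub ((hg.comp_fst μ).integrable one_le_two)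
      ((hg.comp_snd μ).integrable one_le_two), integral_fun_fst, integral_fun_snd]
    simp
  calc ∫ p, (g p.1 - g p.2) ^ 2 ∂μ.prod μ
      = Var[fun p => g p.1 - g p.2; μ.prod μ] :=
        (variance_of_integral_eq_zero
          ((hg.comp_fst μ).aemeasurable.sub (hg.comp_snd μ).aemeasurable) hmean).symm
    _ = Var[g; μ] + Var[-g; μ] := by
        simpa only [Pi.neg_apply, ← sub_eq_add_neg] using variance_add_prod hg hg.neg
    _ = 2 * Var[g; μ] := by rw [variance_neg, two_mul]

end Variance

lemma ae_sum_le_unifCube (m : ℕ) : ∀ᵐ x ∂unifCube m, ∑ i, x i ≤ (m : ℝ) := by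
  have hle : ∀ᵐ x ∂unifCube m, ∀ i, x i ≤ 1 :=
    Measure.ae_pi_le_pi (eventually_pi fun _ =>
      (ae_restrict_mem measurableSet_Icc).mono fun _ h => h.2)
  filter_upwards [hle] with x hx
  simpa using Finset.sum_le_sum fun i (_ : i ∈ Finset.univ) => hx i

section UniformCube

variable {m : ℕ}

def insertNthEquiv (j : Fin (m + 1)) : (Fin m → ℝ) × ℝ ≃ᵐ (Fin (m + 1) → ℝ) :=
  MeasurableEquiv.prodComm.trans (MeasurableEquiv.piFinSuccAbove (fun _ => ℝ) j).symm

lemma measurePreserving_insertNthEquiv (j : Fin (m + 1)) :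
    MeasurePreserving (insertNthEquiv j) ((unifCube m).prod μ₀) (unifCube (m + 1)) :=
  ((measurePreserving_piFinSuccAbove (fun _ => μ₀) j).symm _).comp Measure.measurePreserving_swap

theorem integral_unifCube_succ (j : Fin (m + 1)) {f : (Fin (m + 1) → ℝ) → ℝ}
    (hf : Integrable f (unifCube (m + 1))) :
    ∫ x, f x ∂unifCube (m + 1) = ∫ y, ∫ t, f (j.insertNth t y) ∂μ₀ ∂unifCube m := by
  have h := measurePreserving_insertNthEquiv j
  have hint := (h.integrable_comp_emb (insertNthEquiv j).measurableEmbedding).2 hf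
  rw [← h.integral_comp' f, integral_prod (fun p => f (insertNthEquiv j p)) hint]
  rfl

lemma measurePreserving_removeNth_eval_eval (j : Fin (m + 1)) :
    MeasurePreserving (fun p : (Fin (m + 1) → ℝ) × (Fin (m + 1) → ℝ) =>
      (j.removeNth p.1, p.1 j, p.2 j))
      ((unifCube (m + 1)).prod (unifCube (m + 1))) ((unifCube m).prod (Measure.prod μ₀ μ₀)) :=
  (measurePreserving_prodAssoc _ _ _).comp
    (((measurePreserving_insertNthEquiv j).symm _).prod (measurePreserving_eval (fun _ => μ₀) j))

theorem sobolTauU_eq_integral_variance {f : (Fin (m + 1) → ℝ) → ℝ} (hf : Measurable f)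
    {C : ℝ} (hC : ∀ᵐ x ∂unifCube (m + 1), |f x| ≤ C) (j : Fin (m + 1)) :
    sobolTauU (m + 1) f j = ∫ y, Var[fun t => f (j.insertNth t y); μ₀] ∂unifCube m := by
  set H : (Fin m → ℝ) × ℝ × ℝ → ℝ :=
    fun q => (f (j.insertNth q.2.1 q.1) - f (j.insertNth q.2.2 q.1)) ^ 2
  have hins := measurePreserving_insertNthEquiv j
  have hsplit := measurePreserving_removeNth_eval_eval j
  have hfst := hins.comp ((MeasurePreserving.id (unifCube m)).prod
    (measurePreserving_fst (μ := μ₀) (ν := μ₀)))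
  have hsnd := hins.comp ((MeasurePreserving.id (unifCube m)).prod
    (measurePreserving_snd (μ := μ₀) (ν := μ₀)))
  have hHm : Measurable H :=
    ((hf.comp hfst.measurable).sub (hf.comp hsnd.measurable)).pow_const 2
  have hHint : Integrable H ((unifCube m).prod (Measure.prod μ₀ μ₀)) := by
    refine Integrable.of_bound hHm.aestronglyMeasurable ((C + C) ^ 2) ?_
    filter_upwards [hfst.quasiMeasurePreserving.ae hC, hsnd.quasiMeasurePreserving.ae hC]
      with q h1 h2
    rw [Real.norm_eq_abs, abs_pow]
    exact pow_le_pow_left₀ (abs_nonneg _) ((abs_sub _ _).trans (add_le_add h1 h2)) 2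
  have hmemLp : ∀ᵐ y ∂unifCube m, MemLp (fun t => f (j.insertNth t y)) 2 μ₀ := by
    filter_upwards [Measure.ae_ae_of_ae_prod (hins.quasiMeasurePreserving.ae hC)] with y hy
    exact MemLp.of_bound (hf.comp ((insertNthEquiv j).measurable.comp
      measurable_prodMk_left)).aestronglyMeasurable C hy
  -- the integrand depends on `(x, x')` only through `(x_{-j}, x_j, x'_j)`
  calc sobolTauU (m + 1) f j
      = 1 / 2 * ∫ q, H q ∂(unifCube m).prod (Measure.prod μ₀ μ₀) := by
        rw [sobolTauU, ← hsplit.map_eq,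
          integral_map hsplit.aemeasurable hHm.aestronglyMeasurable]
        simp [H, Fin.insertNth_removeNth]
    _ = 1 / 2 * ∫ y, 2 * Var[fun t => f (j.insertNth t y); μ₀] ∂unifCube m := by
        rw [integral_prod H hHint]
        congr 1
        refine integral_congr_ae ?_
        filter_upwards [hmemLp] with y hy
        exact integral_sub_sq_prod_eq_two_mul_variance hy
    _ = ∫ y, Var[fun t => f (j.insertNth t y); μ₀] ∂unifCube m := by
        rw [integral_const_mul]; ring

end UniformCube

lemma integral_max_zero_pow (n : ℕ) (b : ℝ) :
    ∫ u in (0 : ℝ)..b, max u 0 ^ (n + 1) = max b 0 ^ (n + 2) / (n + 2) := by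
  rcases le_total b 0 with hb | hb
  · have hzero : Set.EqOn (fun u : ℝ => max u 0 ^ (n + 1)) 0 (Set.uIcc 0 b) := by
      intro u hu
      rw [Set.uIcc_of_ge hb] at hu
      simp [max_eq_right hu.2]
    rw [intervalIntegral.integral_congr hzero, max_eq_right hb]
    simp
  · have hid : Set.EqOn (fun u : ℝ => max u 0 ^ (n + 1)) (· ^ (n + 1)) (Set.uIcc 0 b) := by
      intro u hu
      rw [Set.uIcc_of_le hb] at hu
      simp [max_eq_left hu.1]
    rw [intervalIntegral.integral_congr hid, integral_pow, max_eq_left hb]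
    push_cast
    ring

lemma integral_max_add_sub_one_pow (k : ℕ) {s : ℝ} (hs : s ≤ 1) :
    ∫ t, max (s + t - 1) 0 ^ (k + 1) ∂μ₀ = max s 0 ^ (k + 2) / (k + 2) := by
  have hint : ∀ b, IntervalIntegrable (fun u : ℝ => max u 0 ^ (k + 1)) volume 0 b :=
    fun b => (by fun_prop : Continuous fun u : ℝ => max u 0 ^ (k + 1)).intervalIntegrable _ _
  rw [integral_Icc_eq_integral_Ioc, ← intervalIntegral.integral_of_le zero_le_one]
  calc ∫ t in (0 : ℝ)..1, max (s + t - 1) 0 ^ (k + 1)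
      = ∫ u in (s - 1)..s, max u 0 ^ (k + 1) := by
        simpa only [add_zero, sub_add_cancel, sub_add_eq_add_sub] using
          intervalIntegral.integral_comp_add_left (fun u => max u 0 ^ (k + 1)) (s - 1)
            (a := 0) (b := 1)
    _ = max s 0 ^ (k + 2) / (k + 2) := by
        rw [← intervalIntegral.integral_interval_sub_left (hint s) (hint (s - 1)),
          integral_max_zero_pow, integral_max_zero_pow, max_eq_right (by linarith : s - 1 ≤ 0)]
        simp

lemma variance_max_add_sub_one {s : ℝ} (hs : s ≤ 1) :
    Var[fun t => max (s + t - 1) 0; μ₀] = max s 0 ^ 3 / 3 - max s 0 ^ 4 / 4 := by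
  have hbound : ∀ᵐ t ∂μ₀, ‖max (s + t - 1) 0‖ ≤ 1 := by
    filter_upwards [ae_restrict_mem measurableSet_Icc] with t ht
    rw [Real.norm_eq_abs, abs_of_nonneg (le_max_right _ _)]
    exact max_le (by linarith [ht.2]) zero_le_one
  rw [variance_eq_sub (MemLp.of_bound (by fun_prop) 1 hbound)]
  have h1 := integral_max_add_sub_one_pow 0 hs
  have h2 := integral_max_add_sub_one_pow 1 hs
  simp only [zero_add, pow_one, Pi.pow_apply] at h1 h2 ⊢
  rw [h1, h2]
  ring

lemma fdp_one_apply (d : ℕ) (x : Fin d → ℝ) : fdp d 1 x = max (∑ i, x i - (d - 1)) 0 := by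
  simp [fdp]

lemma continuous_fdp_one (d : ℕ) : Continuous (fdp d 1) := by
  simp only [funext (fdp_one_apply d)]
  fun_prop

lemma fdp_one_insertNth {m : ℕ} (j : Fin (m + 1)) (t : ℝ) (y : Fin m → ℝ) :
    fdp (m + 1) 1 (j.insertNth t y) = max (∑ i, y i - (m - 1) + t - 1) 0 := by
  rw [fdp_one_apply, Fin.sum_insertNth]
  push_cast
  ring_nf

lemma ae_abs_fdp_one_le_one (d : ℕ) : ∀ᵐ x ∂unifCube d, |fdp d 1 x| ≤ 1 := by
  filter_upwards [ae_sum_le_unifCube d] with x hx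
  rw [fdp_one_apply, abs_of_nonneg (le_max_right _ _)]
  exact max_le (by linarith) zero_le_one

lemma integrable_fdp_one_pow (d k : ℕ) : Integrable (fun x => fdp d 1 x ^ k) (unifCube d) := by
  refine Integrable.of_bound ((continuous_fdp_one d).pow k).aestronglyMeasurable 1 ?_
  filter_upwards [ae_abs_fdp_one_le_one d] with x hx
  rw [norm_pow, Real.norm_eq_abs]
  exact pow_le_one₀ (abs_nonneg _) hx

def cuspMoment (m k : ℕ) : ℝ := ∫ x, fdp m 1 x ^ k ∂unifCube m

lemma cuspMoment_zero_left (k : ℕ) : cuspMoment 0 k = 1 := by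
  simp [cuspMoment, fdp_one_apply]

lemma cuspMoment_succ_succ (m k : ℕ) :
    cuspMoment (m + 1) (k + 1) = cuspMoment m (k + 2) / (k + 2) := by
  rw [cuspMoment, integral_unifCube_succ 0 (integrable_fdp_one_pow _ _), cuspMoment,
    ← integral_div]
  refine integral_congr_ae ?_
  filter_upwards [ae_sum_le_unifCube m] with y hy
  simp only [fdp_one_insertNth]
  rw [integral_max_add_sub_one_pow k (by linarith), fdp_one_apply]

lemma cuspMoment_succ_eq_factorial_div (m k : ℕ) :
    cuspMoment m (k + 1) = (k + 1)! / (m + k + 1)! := by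
  induction m generalizing k with
  | zero => rw [cuspMoment_zero_left, zero_add, div_self (by positivity)]
  | succ m ih =>
    rw [cuspMoment_succ_succ, ih, show m + (k + 1) + 1 = m + 1 + k + 1 by ring,
      factorial_succ (k + 1)]
    push_cast
    field_simp
    ring

lemma sobolTauU_fdp_one {m : ℕ} (j : Fin (m + 1)) :
    sobolTauU (m + 1) (fdp (m + 1) 1) j = cuspMoment m 3 / 3 - cuspMoment m 4 / 4 := by
  rw [sobolTauU_eq_integral_variance (continuous_fdp_one _).measurable
    (ae_abs_fdp_one_le_one _), cuspMoment, cuspMoment, ← integral_div, ← integral_div,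
    ← integral_sub ((integrable_fdp_one_pow m 3).div_const 3)
      ((integrable_fdp_one_pow m 4).div_const 4)]
  refine integral_congr_ae ?_
  filter_upwards [ae_sum_le_unifCube m] with y hy
  simp only [fdp_one_insertNth]
  rw [variance_max_add_sub_one (by linarith), fdp_one_apply]

lemma variance_fdp_one (d : ℕ) :
    Var[fdp d 1; unifCube d] = cuspMoment d 2 - cuspMoment d 1 ^ 2 := by
  rw [variance_eq_sub (MemLp.of_bound (continuous_fdp_one d).aestronglyMeasurable 1
    (ae_abs_fdp_one_le_one d)), cuspMoment, cuspMoment]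
  simp

theorem meanDimU_fdp_one {d : ℕ} (hd : 0 < d) :
    meanDimU d (fdp d 1)
      = d * (1 - 3 / ((d : ℝ) + 3)) / (1 - ((d : ℝ) + 2) / (2 * ((d + 1)! : ℝ))) := by
  obtain ⟨m, rfl⟩ : ∃ m, d = m + 1 := ⟨d - 1, by omega⟩
  have hτ : ∑ j, sobolTauU (m + 1) (fdp (m + 1) 1) j
      = (m + 1) * (cuspMoment m 3 / 3 - cuspMoment m 4 / 4) := by
    simp [sobolTauU_fdp_one, mul_sub]
  set F : ℝ := (((m + 2)! : ℕ) : ℝ) with hF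
  have h3 : ((m + 3)! : ℝ) = (m + 3) * F := by
    rw [hF, factorial_succ (m + 2)]; push_cast; ring
  have h4 : ((m + 4)! : ℝ) = (m + 4) * ((m + 3) * F) := by
    rw [← h3, factorial_succ (m + 3)]; push_cast; ring
  have hF0 : 0 < F := by positivity
  have hpos : 0 < 2 * F - (m + 3) := by
    have : (m : ℝ) + 2 ≤ F := by rw [hF]; exact_mod_cast self_le_factorial (m + 2)
    linarith
  rw [meanDimU, hτ, variance_fdp_one, cuspMoment_succ_eq_factorial_div m 2,
    cuspMoment_succ_eq_factorial_div m 3, cuspMoment_succ_eq_factorial_div (m + 1) 0,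
    cuspMoment_succ_eq_factorial_div (m + 1) 1]
  simp only [show m + 2 + 1 = m + 3 by ring, show m + 3 + 1 = m + 4 by ring,
    show m + 1 + 0 + 1 = m + 2 by ring, h3, h4, ← hF]
  norm_num [factorial]
  field_simp
  ring

lemma tendsto_sq_div_factorial : Tendsto (fun n : ℕ => (n : ℝ) ^ 2 / n !) atTop (𝓝 0) := by
  refine squeeze_zero (fun n => by positivity) (fun n => ?_)
    (FloorSemiring.tendsto_pow_div_factorial_atTop (4 : ℝ))
  have hn : (n : ℝ) ≤ 2 ^ n := by exact_mod_cast n.lt_two_pow_self.le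
  calc (n : ℝ) ^ 2 / (n ! : ℝ) ≤ (2 ^ n) ^ 2 / (n ! : ℝ) := by gcongr
    _ = 4 ^ n / (n ! : ℝ) := by rw [← pow_mul, mul_comm, pow_mul]; norm_num

lemma meanDimU_fdp_one_sub_eq {d : ℕ} (hd : 0 < d) :
    meanDimU d (fdp d 1) - (d - 3)
      = (9 / ((d : ℝ) + 3) + (d - 3) * ((d + 2) / 2 / (d + 1)!))
          / (1 - (d + 2) / 2 / (d + 1)!) := by
  have hF : (d : ℝ) + 1 ≤ (d + 1)! := by exact_mod_cast self_le_factorial (d + 1)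
  have hd' : (0 : ℝ) < d := by exact_mod_cast hd
  rw [meanDimU_fdp_one hd]
  generalize ((d + 1)! : ℝ) = F at hF ⊢
  have hF0 : 0 < F := by linarith
  have hpos : 0 < 2 * F - (d + 2) := by linarith
  field_simp
  ring

theorem tendsto_meanDimU_fdp_one_sub :
    Tendsto (fun d : ℕ => meanDimU d (fdp d 1) - ((d : ℝ) - 3)) atTop (𝓝 0) := by
  set ε : ℕ → ℝ := fun d => ((d : ℝ) + 2) / 2 / (d + 1)!
  have hsq : Tendsto (fun d : ℕ => ((d : ℝ) + 1) ^ 2 / (d + 1)!) atTop (𝓝 0) :=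
    (tendsto_sq_div_factorial.comp (tendsto_add_atTop_nat 1)).congr fun d => by simp
  have hε : Tendsto ε atTop (𝓝 0) := by
    refine squeeze_zero (fun d => by positivity) (fun d => ?_) hsq
    show ((d : ℝ) + 2) / 2 / (d + 1)! ≤ ((d : ℝ) + 1) ^ 2 / (d + 1)!
    gcongr
    nlinarith [(d.cast_nonneg : (0 : ℝ) ≤ d)]
  have hdε : Tendsto (fun d : ℕ => (d : ℝ) * ε d) atTop (𝓝 0) := by
    refine squeeze_zero (fun d => by positivity) (fun d => ?_) hsq
    calc (d : ℝ) * ε d = d * (d + 2) / 2 / (d + 1)! := by simp only [ε]; ring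
      _ ≤ ((d : ℝ) + 1) ^ 2 / (d + 1)! := by
        gcongr
        nlinarith [(d.cast_nonneg : (0 : ℝ) ≤ d)]
  have h9 : Tendsto (fun d : ℕ => 9 / ((d : ℝ) + 3)) atTop (𝓝 0) :=
    tendsto_const_nhds.div_atTop (tendsto_atTop_add_const_right _ 3 tendsto_natCast_atTop_atTop)
  have heq : ∀ᶠ d : ℕ in atTop, (9 / ((d : ℝ) + 3) + (d * ε d - 3 * ε d)) / (1 - ε d)
      = meanDimU d (fdp d 1) - ((d : ℝ) - 3) := by
    filter_upwards [eventually_gt_atTop 0] with d hd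
    rw [meanDimU_fdp_one_sub_eq hd, sub_mul]
  refine Tendsto.congr' heq ?_
  rw [show (0 : ℝ) = (0 + (0 - 3 * 0)) / (1 - 0) by norm_num]
  exact (h9.add (hdε.sub (hε.const_mul 3))).div (tendsto_const_nhds.sub hε) (by norm_num)

/-- Mean dimension of the kink cusp `f_{d,1}`:
`ν(f_{d,1}) = d(1 − 3/(d+3))/(1 − (d+2)/(2(d+1)!))`, and
`ν(f_{d,1}) = d − 3 + o(1)`. -/
theorem stmt13 :
    (∀ d : ℕ, 2 ≤ d →
      meanDimU d (fdp d 1)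
        = d * (1 - 3 / ((d : ℝ) + 3))
            / (1 - ((d : ℝ) + 2) / (2 * ((d + 1).factorial : ℝ))))
    ∧ Tendsto (fun d : ℕ => meanDimU d (fdp d 1) - ((d : ℝ) - 3))
        atTop (nhds 0) :=
  ⟨fun _ hd => meanDimU_fdp_one (by omega), tendsto_meanDimU_fdp_one_sub⟩

end
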